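/- Let T be a rooted tree of size n with heavy path decomposition, and let m ≥ 1. Then ∑_{H : heavy path of T with n_H ≥ m} n_H ≤ n * (log₂(n/m) + 1), where n_H denotes the size of the subtree rooted at the top node of heavy path H. -/

import Mathlib

open scoped Classical
open Finset

/-- A rooted tree on `n` nodes, given by a parent function, together with a choice
of heavy child (heavy path decomposition). The `rank` function witnesses acyclicity. -/
structure HPTree (n : ℕ) where
  parent : Fin n → Fin n
  root : Fin n
  parent_root : parent root = root
  rank : Fin n → ℕ
  rank_lt : ∀ v, v ≠ root → rank (parent v) < rank v
  heavyChild : Fin n → Option (Fin n)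

namespace HPTree

variable {n : ℕ}

/-- `v` is an ancestor of `u` (every node is an ancestor of itself). -/
def isAnc (T : HPTree n) (v u : Fin n) : Prop := ∃ k, T.parent^[k] u = v

/-- The number of nodes in the subtree rooted at `v`. -/
noncomputable def subtreeSize (T : HPTree n) (v : Fin n) : ℕ :=
  (univ.filter fun u => T.isAnc v u).card

/-- `c` is a child of `v`. -/
def isChild (T : HPTree n) (c v : Fin n) : Prop := T.parent c = v ∧ c ≠ v

/-- The designated heavy child of every node is a child whose subtree size is
maximal among the children, and every node with at least one child has one. -/
def heavyValid (T : HPTree n) : Prop :=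
  (∀ v c, T.heavyChild v = some c → T.isChild c v ∧
    ∀ c', T.isChild c' v → T.subtreeSize c' ≤ T.subtreeSize c) ∧
  (∀ v c', T.isChild c' v → ∃ c, T.heavyChild v = some c)

/-- A node is light if it is the root or is not the heavy child of its parent. -/
def isLight (T : HPTree n) (v : Fin n) : Prop :=
  v = T.root ∨ T.heavyChild (T.parent v) ≠ some v

/-- The number of light ancestors of `u` (including `u` itself). -/
noncomputable def ldepth (T : HPTree n) (u : Fin n) : ℕ :=
  (univ.filter fun v => T.isAnc v u ∧ T.isLight v).card

end HPTree

/-! Count every node `u` once for each light ancestor `v` with `|T^v| ≥ m`. Passing from a light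
node to any strict ancestor at least doubles the subtree size, since the heavy sibling's subtree
is at least as large. Hence a light node `b` with `ℓ` light ancestors satisfies
`2^ℓ |T^b| ≤ 2n`; taking `b` the lowest big light ancestor of `u`, there are at most
`log₂(n/m) + 1` of them. -/

namespace HPTree

variable {n : ℕ} (T : HPTree n)

lemma rank_parent_le (x : Fin n) : T.rank (T.parent x) ≤ T.rank x := by
  by_cases hx : x = T.root
  · rw [hx, T.parent_root]
  · exact (T.rank_lt x hx).le

lemma rank_lt_of_isAnc {v u : Fin n} (h : T.isAnc v u) (hne : v ≠ u) : T.rank v < T.rank u := by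
  obtain ⟨k, rfl⟩ := h
  induction k with
  | zero => exact absurd rfl hne
  | succ k ih =>
    rw [Function.iterate_succ_apply'] at hne ⊢
    by_cases hk : T.parent^[k] u = u
    · rw [hk] at hne ⊢
      exact T.rank_lt u fun hu => hne (hu ▸ T.parent_root)
    · exact (T.rank_parent_le _).trans_lt (ih hk)

lemma isAnc_refl (u : Fin n) : T.isAnc u u := ⟨0, rfl⟩

lemma isAnc_parent (u : Fin n) : T.isAnc (T.parent u) u := ⟨1, rfl⟩

lemma isAnc_trans {v w u : Fin n} (h : T.isAnc v w) (h' : T.isAnc w u) : T.isAnc v u := by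
  obtain ⟨k, rfl⟩ := h
  obtain ⟨j, rfl⟩ := h'
  exact ⟨k + j, Function.iterate_add_apply _ k j u⟩

lemma isAnc_antisymm {v u : Fin n} (h : T.isAnc v u) (h' : T.isAnc u v) : v = u := by
  by_contra hne
  exact (T.rank_lt_of_isAnc h hne).not_gt (T.rank_lt_of_isAnc h' (Ne.symm hne))

lemma isAnc_total {v w u : Fin n} (h : T.isAnc v u) (h' : T.isAnc w u) :
    T.isAnc v w ∨ T.isAnc w v := by
  obtain ⟨k, rfl⟩ := h
  obtain ⟨j, rfl⟩ := h'
  rcases le_total k j with hkj | hjk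
  · exact .inr ⟨j - k, by rw [← Function.iterate_add_apply, Nat.sub_add_cancel hkj]⟩
  · exact .inl ⟨k - j, by rw [← Function.iterate_add_apply, Nat.sub_add_cancel hjk]⟩

lemma isAnc_of_rank_le {v w u : Fin n} (hv : T.isAnc v u) (hw : T.isAnc w u)
    (h : T.rank v ≤ T.rank w) : T.isAnc v w := by
  rcases eq_or_ne w v with rfl | hne
  · exact T.isAnc_refl w
  · exact (T.isAnc_total hv hw).resolve_right fun hwv => (T.rank_lt_of_isAnc hwv hne).not_ge h

lemma isAnc_parent_of_isAnc {w v : Fin n} (h : T.isAnc w v) (hne : w ≠ v) :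
    T.isAnc w (T.parent v) := by
  obtain ⟨_ | k, rfl⟩ := h
  · exact absurd rfl hne
  · exact ⟨k, (Function.iterate_succ_apply _ k v).symm⟩

lemma eq_root_of_isAnc_root {w : Fin n} (h : T.isAnc w T.root) : w = T.root := by
  obtain ⟨k, rfl⟩ := h
  exact Function.iterate_fixed T.parent_root k

lemma subtreeSize_le_of_isAnc {v w : Fin n} (h : T.isAnc w v) :
    T.subtreeSize v ≤ T.subtreeSize w :=
  card_le_card fun u hu => by
    simp only [mem_filter, mem_univ, true_and] at hu ⊢
    exact T.isAnc_trans h hu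

lemma subtreeSize_le (v : Fin n) : T.subtreeSize v ≤ n :=
  (card_le_univ _).trans_eq (Fintype.card_fin n)

lemma isChild_parent {v : Fin n} (hv : v ≠ T.root) : T.isChild v (T.parent v) :=
  ⟨rfl, fun h => (T.rank_lt v hv).ne (congrArg T.rank h.symm)⟩

lemma subtreeSize_add_subtreeSize_le {c c' p : Fin n} (hc : T.isChild c p)
    (hc' : T.isChild c' p) (hne : c ≠ c') :
    T.subtreeSize c + T.subtreeSize c' ≤ T.subtreeSize p := by
  -- a node below both `c` and `c'` would make one of them an ancestor of `p`, its own parent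
  have below_child {a b : Fin n} (ha : T.isChild a p) (hb : T.isChild b p) (hab : a ≠ b)
      (h : T.isAnc a b) : False := by
    have hap : T.isAnc a p := hb.1 ▸ T.isAnc_parent_of_isAnc h hab
    exact ha.2 (T.isAnc_antisymm hap (ha.1 ▸ T.isAnc_parent a))
  have hdisj : Disjoint (univ.filter fun u => T.isAnc c u) (univ.filter fun u => T.isAnc c' u) := by
    refine disjoint_left.mpr fun u hu hu' => ?_
    simp only [mem_filter, mem_univ, true_and] at hu hu'
    rcases T.isAnc_total hu hu' with h | h
    · exact below_child hc hc' hne h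
    · exact below_child hc' hc hne.symm h
  rw [subtreeSize, subtreeSize, subtreeSize, ← card_union_of_disjoint hdisj]
  refine card_le_card fun u hu => ?_
  simp only [mem_union, mem_filter, mem_univ, true_and] at hu ⊢
  rcases hu with hu | hu
  · exact T.isAnc_trans (hc.1 ▸ T.isAnc_parent c) hu
  · exact T.isAnc_trans (hc'.1 ▸ T.isAnc_parent c') hu

variable {T}

lemma two_mul_subtreeSize_le_of_isLight (hT : T.heavyValid) {v w : Fin n} (hv : T.isLight v)
    (h : T.isAnc w v) (hne : w ≠ v) : 2 * T.subtreeSize v ≤ T.subtreeSize w := by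
  have hroot : v ≠ T.root := by
    rintro rfl
    exact hne (T.eq_root_of_isAnc_root h)
  have hchild := T.isChild_parent hroot
  obtain ⟨c, hc⟩ := hT.2 _ _ hchild
  obtain ⟨hcchild, hcmax⟩ := hT.1 _ _ hc
  have hcv : c ≠ v := by
    rintro rfl
    exact hv.elim hroot (· hc)
  calc 2 * T.subtreeSize v ≤ T.subtreeSize c + T.subtreeSize v := by
        have := hcmax v hchild
        omega
    _ ≤ T.subtreeSize (T.parent v) := T.subtreeSize_add_subtreeSize_le hcchild hchild hcv
    _ ≤ T.subtreeSize w := T.subtreeSize_le_of_isAnc (T.isAnc_parent_of_isAnc h hne)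

lemma two_pow_ldepth_mul_subtreeSize_le (hT : T.heavyValid) {v : Fin n} (hv : T.isLight v) :
    2 ^ T.ldepth v * T.subtreeSize v ≤ 2 * n := by
  induction hr : T.rank v using Nat.strong_induction_on generalizing v with
  | _ r ih =>
  set A := univ.filter fun w => (T.isAnc w v ∧ T.isLight w) ∧ w ≠ v
  have mem_A {w : Fin n} (hw : T.isAnc w v ∧ T.isLight w) (hne : w ≠ v) : w ∈ A := by
    simp [A, hw, hne]
  rcases A.eq_empty_or_nonempty with hA | hA
  · have hdepth : T.ldepth v ≤ 1 := (card_le_card (t := {v}) fun w hw => by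
      by_contra hne
      simpa [hA] using mem_A (mem_filter.mp hw).2 (by simpa using hne)).trans_eq (card_singleton v)
    calc 2 ^ T.ldepth v * T.subtreeSize v ≤ 2 ^ 1 * n :=
          Nat.mul_le_mul (Nat.pow_le_pow_right two_pos hdepth) (T.subtreeSize_le v)
      _ = 2 * n := by ring
  · obtain ⟨w, hwA, hwmax⟩ := A.exists_max_image T.rank hA
    obtain ⟨⟨hwv, hwl⟩, hwne⟩ := (mem_filter.mp hwA).2
    -- the light ancestors of `v` are `v` and the light ancestors of its nearest one, `w`
    have hdepth : T.ldepth v ≤ T.ldepth w + 1 := by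
      refine (card_le_card fun x hx => ?_).trans (card_insert_le v _)
      obtain ⟨hxv, hxl⟩ := (mem_filter.mp hx).2
      rcases eq_or_ne x v with rfl | hne
      · exact mem_insert_self _ _
      · exact mem_insert_of_mem (mem_filter.mpr ⟨mem_univ _,
          T.isAnc_of_rank_le hxv hwv (hwmax x (mem_A ⟨hxv, hxl⟩ hne)), hxl⟩)
    calc 2 ^ T.ldepth v * T.subtreeSize v ≤ 2 ^ (T.ldepth w + 1) * T.subtreeSize v :=
          Nat.mul_le_mul_right _ (Nat.pow_le_pow_right two_pos hdepth)
      _ = 2 ^ T.ldepth w * (2 * T.subtreeSize v) := by ring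
      _ ≤ 2 ^ T.ldepth w * T.subtreeSize w :=
          Nat.mul_le_mul_left _ (two_mul_subtreeSize_le_of_isLight hT hv hwv hwne)
      _ ≤ 2 * n := ih _ (hr ▸ T.rank_lt_of_isAnc hwv hwne) hwl rfl

lemma two_pow_card_filter_isAnc_mul_le (hT : T.heavyValid) {m : ℝ} (hm : 0 ≤ m)
    (hmn : m ≤ n) (u : Fin n) :
    (2 : ℝ) ^ #((univ.filter fun v => T.isLight v ∧ m ≤ (T.subtreeSize v : ℝ)).filter
      fun v => T.isAnc v u) * m ≤ 2 * n := by
  set S := (univ.filter fun v => T.isLight v ∧ m ≤ (T.subtreeSize v : ℝ)).filter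
    fun v => T.isAnc v u
  rcases S.eq_empty_or_nonempty with hS | hS
  · rw [hS, card_empty, pow_zero, one_mul]
    linarith
  obtain ⟨b, hbS, hbmax⟩ := S.exists_max_image T.rank hS
  simp only [S, mem_filter, mem_univ, true_and] at hbS hbmax
  have hcard : #S ≤ T.ldepth b := card_le_card fun x hx => by
    simp only [S, mem_filter, mem_univ, true_and] at hx ⊢
    exact ⟨T.isAnc_of_rank_le hx.2 hbS.2 (hbmax x hx), hx.1.1⟩
  calc (2 : ℝ) ^ #S * m ≤ 2 ^ T.ldepth b * m := by gcongr; norm_num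
    _ ≤ 2 ^ T.ldepth b * T.subtreeSize b := by gcongr; exact hbS.1.2
    _ ≤ 2 * n := by exact_mod_cast two_pow_ldepth_mul_subtreeSize_le hT hbS.1.1

variable (T)

lemma sum_subtreeSize_eq_sum_card_isAnc (s : Finset (Fin n)) :
    ∑ v ∈ s, T.subtreeSize v = ∑ u, #(s.filter fun v => T.isAnc v u) := by
  simp only [subtreeSize, card_filter]
  exact sum_comm

end HPTree

lemma natCast_le_logb_div_add_one {k : ℕ} {x m : ℝ} (hm : 0 < m) (h : 2 ^ k * m ≤ 2 * x) :
    (k : ℝ) ≤ Real.logb 2 (x / m) + 1 := by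
  have hxm : (2 : ℝ) ^ k ≤ 2 * (x / m) := by
    rw [mul_div_assoc']
    exact (le_div_iff₀ hm).mpr h
  have hpos : 0 < x / m := by
    have : (0 : ℝ) < 2 ^ k := by positivity
    linarith
  have := Real.logb_le_logb_of_le one_lt_two (by positivity) hxm
  rwa [Real.logb_pow, Real.logb_self_eq_one one_lt_two, mul_one,
    Real.logb_mul two_ne_zero hpos.ne', Real.logb_self_eq_one one_lt_two, add_comm] at this

/-- Heavy paths are indexed by their top nodes, which are exactly the light nodes, and
`n_H = |T^{top(H)}|`. -/
theorem sum_big_heavy_paths_le {n : ℕ} (T : HPTree n) (hT : T.heavyValid)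
    (m : ℝ) (hm : 1 ≤ m) (hmn : m ≤ (n : ℝ)) :
    (∑ v ∈ Finset.univ.filter
        (fun v => T.isLight v ∧ m ≤ (T.subtreeSize v : ℝ)), (T.subtreeSize v : ℝ))
      ≤ (n : ℝ) * (Real.logb 2 ((n : ℝ) / m) + 1) := by
  have hm0 : 0 < m := by linarith
  calc (∑ v ∈ univ.filter (fun v => T.isLight v ∧ m ≤ (T.subtreeSize v : ℝ)),
        (T.subtreeSize v : ℝ))
      = ∑ u, (#((univ.filter fun v => T.isLight v ∧ m ≤ (T.subtreeSize v : ℝ)).filter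
          fun v => T.isAnc v u) : ℝ) := by
        exact_mod_cast T.sum_subtreeSize_eq_sum_card_isAnc _
    _ ≤ ∑ _u : Fin n, (Real.logb 2 ((n : ℝ) / m) + 1) := sum_le_sum fun u _ =>
        natCast_le_logb_div_add_one hm0 (HPTree.two_pow_card_filter_isAnc_mul_le hT hm0.le hmn u)
    _ = (n : ℝ) * (Real.logb 2 ((n : ℝ) / m) + 1) := by
        rw [sum_const, card_univ, Fintype.card_fin, nsmul_eq_mul]
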